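/- Let (X, μ) be a measure space, L ∈ ℕ, κ ≥ 1, and let q₀, q₁, …, q_L be measurable sets each of finite positive measure such that for every j ∈ {1,…,L} the overlap condition μ(q_j) ≤ κ · μ( q_j ∩ ⋃_{ℓ<j} q_ℓ ) holds (in particular μ(q_j ∩ ⋃_{ℓ<j} q_ℓ) > 0). Set q := ⋃_{ℓ=0}^{L} q_ℓ. Then every v ∈ L²(q) satisfies ‖v − ⟨v⟩_q‖²_{L²(q)} ≤ (1 + 2κ)^L ∑_{ℓ=0}^{L} ‖v − ⟨v⟩_{q_ℓ}‖²_{L²(q_ℓ)}. -/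

import Mathlib

/-!
Adding a set `B` to a set `A`: replacing `⟨v⟩_{A ∪ B}` by `⟨v⟩_A` can only increase the
deviation, and on `B` the deviation from `⟨v⟩_A` is the deviation from `⟨v⟩_B` plus
`μ(B) (⟨v⟩_B - ⟨v⟩_A)²`. Comparing both means with the mean over the overlap `B ∩ A` bounds
`μ(B ∩ A) (⟨v⟩_B - ⟨v⟩_A)²` by twice the sum of the deviations on `A` and `B`, and the overlap
condition trades `μ(B)` for `κ μ(B ∩ A)`. So each added set costs a factor `1 + 2κ`.
-/

open MeasureTheory Set

/-- The integral mean `⟨v⟩_A = μ(A)⁻¹ ∫_A v dμ`. -/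
noncomputable def setMean {X : Type*} [MeasurableSpace X] (μ : Measure X)
    (A : Set X) (v : X → ℝ) : ℝ :=
  (μ A).toReal⁻¹ * ∫ x in A, v x ∂μ

/-- `‖v - ⟨v⟩_A‖²_{L²(A)}`. -/
noncomputable def sqDev {X : Type*} [MeasurableSpace X] (μ : Measure X) (A : Set X)
    (v : X → ℝ) : ℝ :=
  ∫ x in A, (v x - setMean μ A v) ^ 2 ∂μ

section

variable {X : Type*} [MeasurableSpace X] {μ : Measure X} {A B S : Set X} {v : X → ℝ}

lemma sqDev_nonneg : 0 ≤ sqDev μ A v :=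
  integral_nonneg fun _ => sq_nonneg _

lemma setIntegral_union_le_of_nonneg {f : X → ℝ} (hf : ∀ x, 0 ≤ f x)
    (hA : IntegrableOn f A μ) (hB : IntegrableOn f B μ) :
    ∫ x in A ∪ B, f x ∂μ ≤ ∫ x in A, f x ∂μ + ∫ x in B, f x ∂μ := by
  rw [← integral_add_measure hA hB]
  exact integral_mono_measure (Measure.restrict_union_le A B)
    (Filter.Eventually.of_forall hf) (Integrable.add_measure hA hB)

lemma measureReal_mul_setMean (hA : μ A ≠ ⊤) :
    μ.real A * setMean μ A v = ∫ x in A, v x ∂μ := by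
  rcases eq_or_ne (μ A) 0 with h0 | h0
  · simp [Measure.restrict_eq_zero.2 h0, measureReal_def, h0]
  · rw [setMean, measureReal_def, mul_inv_cancel_left₀ (ENNReal.toReal_ne_zero.2 ⟨h0, hA⟩)]

lemma setIntegral_sub_setMean (hA : μ A ≠ ⊤) (hv : IntegrableOn v A μ) :
    ∫ x in A, (v x - setMean μ A v) ∂μ = 0 := by
  have := isFiniteMeasure_restrict.2 hA
  rw [integral_sub hv (integrable_const _), setIntegral_const, smul_eq_mul,
    measureReal_mul_setMean hA, sub_self]

lemma setIntegral_sq_sub_eq (hA : μ A ≠ ⊤) (hv : MemLp v 2 (μ.restrict A)) (c : ℝ) :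
    ∫ x in A, (v x - c) ^ 2 ∂μ = sqDev μ A v + μ.real A * (setMean μ A v - c) ^ 2 := by
  have := isFiniteMeasure_restrict.2 hA
  set m := setMean μ A v
  have hsq : IntegrableOn (fun x => (v x - m) ^ 2) A μ := (hv.sub (memLp_const m)).integrable_sq
  have hlin : IntegrableOn (fun x => 2 * (m - c) * (v x - m)) A μ :=
    ((hv.integrable one_le_two).sub (integrable_const m)).const_mul _
  have hlin' : IntegrableOn (fun x => 2 * (m - c) * (v x - m) + (m - c) ^ 2) A μ :=
    hlin.add (integrable_const _)
  calc ∫ x in A, (v x - c) ^ 2 ∂μ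
      = ∫ x in A, ((v x - m) ^ 2 + (2 * (m - c) * (v x - m) + (m - c) ^ 2)) ∂μ := by
        congr 1; ext x; ring
    _ = sqDev μ A v + (2 * (m - c) * ∫ x in A, (v x - m) ∂μ) + μ.real A * (m - c) ^ 2 := by
        rw [integral_add hsq hlin',
          integral_add hlin (integrable_const _), integral_const_mul, setIntegral_const,
          smul_eq_mul, add_assoc]
        rfl
    _ = sqDev μ A v + μ.real A * (m - c) ^ 2 := by
        rw [setIntegral_sub_setMean hA (hv.integrable one_le_two), mul_zero, add_zero]

lemma sqDev_le_setIntegral_sq_sub (hA : μ A ≠ ⊤) (hv : MemLp v 2 (μ.restrict A)) (c : ℝ) :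
    sqDev μ A v ≤ ∫ x in A, (v x - c) ^ 2 ∂μ := by
  rw [setIntegral_sq_sub_eq hA hv c]
  exact le_add_of_nonneg_right (by positivity)

lemma measureReal_mul_sq_setMean_sub_le (hSA : S ⊆ A) (hA : μ A ≠ ⊤)
    (hv : MemLp v 2 (μ.restrict A)) (c : ℝ) :
    μ.real S * (setMean μ S v - c) ^ 2 ≤ ∫ x in A, (v x - c) ^ 2 ∂μ := by
  have := isFiniteMeasure_restrict.2 hA
  have hS : μ S ≠ ⊤ := ne_top_of_le_ne_top hA (measure_mono hSA)
  calc μ.real S * (setMean μ S v - c) ^ 2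
      ≤ ∫ x in S, (v x - c) ^ 2 ∂μ := by
        rw [setIntegral_sq_sub_eq hS (hv.mono_measure (Measure.restrict_mono hSA le_rfl)) c]
        exact le_add_of_nonneg_left sqDev_nonneg
    _ ≤ ∫ x in A, (v x - c) ^ 2 ∂μ :=
        setIntegral_mono_set (hv.sub (memLp_const c)).integrable_sq
          (Filter.Eventually.of_forall fun _ => sq_nonneg _) hSA.eventuallyLE

lemma measureReal_inter_mul_sq_setMean_sub_setMean_le (hA : μ A ≠ ⊤) (hB : μ B ≠ ⊤)
    (hvA : MemLp v 2 (μ.restrict A)) (hvB : MemLp v 2 (μ.restrict B)) :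
    μ.real (B ∩ A) * (setMean μ B v - setMean μ A v) ^ 2
      ≤ 2 * (sqDev μ A v + sqDev μ B v) := by
  set mA := setMean μ A v
  set mB := setMean μ B v
  set mS := setMean μ (B ∩ A) v
  have hA' := measureReal_mul_sq_setMean_sub_le (inter_subset_right (s := B)) hA hvA mA
  have hB' := measureReal_mul_sq_setMean_sub_le (inter_subset_left (t := A)) hB hvB mB
  calc μ.real (B ∩ A) * (mB - mA) ^ 2
      ≤ μ.real (B ∩ A) * (2 * (mS - mA) ^ 2 + 2 * (mS - mB) ^ 2) := by
        gcongr
        nlinarith [sq_nonneg (2 * mS - mA - mB)]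
    _ ≤ 2 * (sqDev μ A v + sqDev μ B v) := by
        unfold sqDev; linarith

lemma sqDev_union_le {κ : ℝ} (hκ : 0 ≤ κ) (hA : μ A ≠ ⊤) (hB : μ B ≠ ⊤)
    (hover : μ B ≤ ENNReal.ofReal κ * μ (B ∩ A)) (hv : MemLp v 2 (μ.restrict (A ∪ B))) :
    sqDev μ (A ∪ B) v ≤ (1 + 2 * κ) * (sqDev μ A v + sqDev μ B v) := by
  have hvA := hv.mono_measure (Measure.restrict_mono (subset_union_left (t := B)) le_rfl)
  have hvB := hv.mono_measure (Measure.restrict_mono (subset_union_right (s := A)) le_rfl)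
  have hAB : μ (A ∪ B) ≠ ⊤ := measure_union_ne_top hA hB
  have := isFiniteMeasure_restrict.2 hAB
  have hκB : μ.real B ≤ κ * μ.real (B ∩ A) := by
    simpa [measureReal_def, ENNReal.toReal_mul, ENNReal.toReal_ofReal hκ] using
      ENNReal.toReal_mono (ENNReal.mul_ne_top ENNReal.ofReal_ne_top
        (ne_top_of_le_ne_top hB (measure_mono inter_subset_left))) hover
  have hmeans := mul_le_mul_of_nonneg_left
    (measureReal_inter_mul_sq_setMean_sub_setMean_le hA hB hvA hvB) hκ
  set mA := setMean μ A v
  have hint : IntegrableOn (fun x => (v x - mA) ^ 2) (A ∪ B) μ :=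
    (hv.sub (memLp_const _)).integrable_sq
  set d := (setMean μ B v - mA) ^ 2
  calc sqDev μ (A ∪ B) v
      ≤ ∫ x in A ∪ B, (v x - mA) ^ 2 ∂μ := sqDev_le_setIntegral_sq_sub hAB hv _
    _ ≤ ∫ x in A, (v x - mA) ^ 2 ∂μ + ∫ x in B, (v x - mA) ^ 2 ∂μ :=
        setIntegral_union_le_of_nonneg (fun _ => sq_nonneg _)
          hint.left_of_union hint.right_of_union
    _ = sqDev μ A v + sqDev μ B v + μ.real B * d := by
        rw [setIntegral_sq_sub_eq hB hvB, add_assoc]; rfl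
    _ ≤ sqDev μ A v + sqDev μ B v + κ * (μ.real (B ∩ A) * d) := by
        rw [← mul_assoc]; gcongr
    _ ≤ (1 + 2 * κ) * (sqDev μ A v + sqDev μ B v) := by linarith

lemma sqDev_biUnion_range_le {κ : ℝ} (hκ : 0 ≤ κ) {q : ℕ → Set X} (n : ℕ)
    (hfin : ∀ ℓ ≤ n, μ (q ℓ) ≠ ⊤)
    (hover : ∀ j, 1 ≤ j → j ≤ n →
      μ (q j) ≤ ENNReal.ofReal κ * μ (q j ∩ ⋃ ℓ ∈ Finset.range j, q ℓ))
    (hv : MemLp v 2 (μ.restrict (⋃ ℓ ∈ Finset.range (n + 1), q ℓ))) :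
    sqDev μ (⋃ ℓ ∈ Finset.range (n + 1), q ℓ) v
      ≤ (1 + 2 * κ) ^ n * ∑ ℓ ∈ Finset.range (n + 1), sqDev μ (q ℓ) v := by
  induction n with
  | zero => simp
  | succ n ih =>
    set U := ⋃ ℓ ∈ Finset.range (n + 1), q ℓ
    have hsplit : ⋃ ℓ ∈ Finset.range (n + 2), q ℓ = U ∪ q (n + 1) := by
      rw [Finset.range_add_one, Finset.set_biUnion_insert, union_comm]
    rw [hsplit] at hv ⊢
    have hU : μ U ≠ ⊤ :=
      (measure_biUnion_lt_top (Finset.range _).finite_toSet fun ℓ hℓ =>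
        (hfin ℓ (by simp at hℓ; omega)).lt_top).ne
    have ih' := ih (fun ℓ hℓ => hfin ℓ (by omega)) (fun j hj hjn => hover j hj (by omega))
      (hv.mono_measure (Measure.restrict_mono subset_union_left le_rfl))
    have hpow : 1 ≤ (1 + 2 * κ) ^ n := one_le_pow₀ (by linarith)
    calc sqDev μ (U ∪ q (n + 1)) v
        ≤ (1 + 2 * κ) * (sqDev μ U v + sqDev μ (q (n + 1)) v) :=
          sqDev_union_le hκ hU (hfin _ le_rfl) (hover _ (by omega) le_rfl) hv
      _ ≤ (1 + 2 * κ) * ((1 + 2 * κ) ^ n * ∑ ℓ ∈ Finset.range (n + 1), sqDev μ (q ℓ) v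
            + (1 + 2 * κ) ^ n * sqDev μ (q (n + 1)) v) := by
          gcongr
          exact le_mul_of_one_le_left sqDev_nonneg hpow
      _ = (1 + 2 * κ) ^ (n + 1) * ∑ ℓ ∈ Finset.range (n + 2), sqDev μ (q ℓ) v := by
          rw [Finset.sum_range_succ _ (n + 1), pow_succ]; ring

end

theorem stmt_5_general {X : Type*} [MeasurableSpace X] (μ : Measure X)
    (L : ℕ) (κ : ℝ) (hκ : 1 ≤ κ)
    (q : ℕ → Set X) (hqfin : ∀ ℓ ≤ L, μ (q ℓ) < ⊤)
    (hover : ∀ j, 1 ≤ j → j ≤ L →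
      μ (q j) ≤ ENNReal.ofReal κ * μ (q j ∩ ⋃ ℓ ∈ Finset.range j, q ℓ))
    (v : X → ℝ) (hv : MemLp v 2 (μ.restrict (⋃ ℓ ∈ Finset.range (L + 1), q ℓ))) :
    (∫ x in ⋃ ℓ ∈ Finset.range (L + 1), q ℓ,
        (v x - setMean μ (⋃ ℓ ∈ Finset.range (L + 1), q ℓ) v) ^ 2 ∂μ)
      ≤ (1 + 2 * κ) ^ L *
          ∑ ℓ ∈ Finset.range (L + 1),
            ∫ x in q ℓ, (v x - setMean μ (q ℓ) v) ^ 2 ∂μ :=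
  sqDev_biUnion_range_le (zero_le_one.trans hκ) L (fun ℓ hℓ => (hqfin ℓ hℓ).ne) hover hv

/-- Chained patching estimate obtained by iterating the two-set overlapping
step in the proof of the generalized parabolic Poincaré inequality
(Lemma 4.4): for sets `q₀, …, q_L` of finite positive measure satisfying the
overlap condition `μ(q_j) ≤ κ μ(q_j ∩ ⋃_{ℓ<j} q_ℓ)`, with `q = ⋃ q_ℓ`,
`‖v − ⟨v⟩_q‖²_{L²(q)} ≤ (1+2κ)^L ∑_ℓ ‖v − ⟨v⟩_{q_ℓ}‖²_{L²(q_ℓ)}`. -/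
theorem stmt_5 {X : Type*} [MeasurableSpace X] (μ : Measure X)
    (L : ℕ) (κ : ℝ) (hκ : 1 ≤ κ)
    (q : ℕ → Set X) (hqMeas : ∀ ℓ ≤ L, MeasurableSet (q ℓ))
    (hq0 : ∀ ℓ ≤ L, 0 < μ (q ℓ)) (hqfin : ∀ ℓ ≤ L, μ (q ℓ) < ⊤)
    (hover : ∀ j, 1 ≤ j → j ≤ L →
      μ (q j) ≤ ENNReal.ofReal κ * μ (q j ∩ ⋃ ℓ ∈ Finset.range j, q ℓ))
    (v : X → ℝ) (hv : MemLp v 2 (μ.restrict (⋃ ℓ ∈ Finset.range (L + 1), q ℓ))) :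
    (∫ x in ⋃ ℓ ∈ Finset.range (L + 1), q ℓ,
        (v x - setMean μ (⋃ ℓ ∈ Finset.range (L + 1), q ℓ) v) ^ 2 ∂μ)
      ≤ (1 + 2 * κ) ^ L *
          ∑ ℓ ∈ Finset.range (L + 1),
            ∫ x in q ℓ, (v x - setMean μ (q ℓ) v) ^ 2 ∂μ :=
  stmt_5_general μ L κ hκ q hqfin hover v hv
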